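/- If a graph G = (V,E) without self-loops is 3-colorable with coloring f: V → {1,2,3}, then the partition of D_G obtained by assigning the i-th set of auxiliary rows to block T_i and assigning row 3n+v (corresponding to node v) to block T_{f(v)} yields σ_{r_0}(T_i) = 1 for each i ∈ {1,2,3}. -/

import Mathlib

/-- The matrix `M_G` of the RDF graph `D_G` built from a loop-free undirected
graph on nodes `0, …, N-1` with adjacency `adj`: a `(4N) × (2N+3)` 0/1 matrix
with three upper auxiliary sections (sections `0,1,2`) and one lower section
(section `3`).  Columns: `0 = sp1`, `1 = sp2`, `2 = idp`, then a left column
set of `N` columns (identity blocks) and a right column set of `N` columns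
(identity blocks in the upper sections, complemented adjacency matrix in the
lower section). -/
def MG (N : ℕ) (adj : ℕ → ℕ → Bool) (r : Fin (4 * N)) (c : Fin (2 * N + 3)) : Bool :=
  let sec := r.val / N
  let i := r.val % N
  if c.val = 0 then decide (sec = 2 ∨ sec = 3)
  else if c.val = 1 then decide (sec = 1 ∨ sec = 3)
  else if c.val = 2 then decide (sec ≠ 3)
  else if c.val < 3 + N then decide (c.val = 3 + i)
  else if sec ≠ 3 then decide (c.val = 3 + N + i)
  else !(adj i (c.val - (3 + N)))

/-- A cell of the submatrix of `M_G` induced by the set `T` of rows. -/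
abbrev CellT (N : ℕ) (T : Finset (Fin (4 * N))) :=
  {r : Fin (4 * N) // r ∈ T} × Fin (2 * N + 3)

/-- The antecedent of the fixed rule `r₀`, for a variable assignment `ρ` of the
eleven variables `x, c₁, c₂, y, d₁, d₂, z, e, u, f₁, f₂` (indexed
`0, …, 10` in this order) to cells of the submatrix of `M_G` with rows `T`. -/
def AntR0 (N : ℕ) (adj : ℕ → ℕ → Bool) (T : Finset (Fin (4 * N)))
    (ρ : Fin 11 → CellT N T) : Prop :=
  let sj : Fin 11 → Fin (4 * N) := fun k => ((ρ k).1 : Fin (4 * N))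
  let pr : Fin 11 → Fin (2 * N + 3) := fun k => (ρ k).2
  let vl : Fin 11 → Bool := fun k => MG N adj ((ρ k).1 : Fin (4 * N)) ((ρ k).2)
  -- no variable among c₁,c₂,d₁,d₂,e,f₁,f₂ points to columns sp1 or sp2
  (∀ k : Fin 11, k ∈ ({1, 2, 4, 5, 7, 9, 10} : Finset (Fin 11)) →
      (pr k).val ≠ 0 ∧ (pr k).val ≠ 1) ∧
  -- prop(x) = idp ∧ val(x) = 1
  (pr 0).val = 2 ∧ vl 0 = true ∧
  -- c₁ ≠ x ∧ subj(c₁) = subj(x) ∧ val(c₁) = 1, same for c₂, and c₁ ≠ c₂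
  ρ 1 ≠ ρ 0 ∧ sj 1 = sj 0 ∧ vl 1 = true ∧
  ρ 2 ≠ ρ 0 ∧ sj 2 = sj 0 ∧ vl 2 = true ∧
  ρ 1 ≠ ρ 2 ∧
  -- prop(y) = idp ∧ val(y) = 0 ∧ d₁, d₂ on the row of y and the columns of c₁, c₂
  (pr 3).val = 2 ∧ vl 3 = false ∧
  sj 4 = sj 3 ∧ pr 4 = pr 1 ∧
  sj 5 = sj 3 ∧ pr 5 = pr 2 ∧
  -- prop(z) = idp ∧ subj(z) = subj(e) ∧ prop(e) = prop(c₁) ∧ e ≠ c₁ ∧ val(e) = 1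
  (pr 6).val = 2 ∧ sj 6 = sj 7 ∧ pr 7 = pr 1 ∧ ρ 7 ≠ ρ 1 ∧ vl 7 = true ∧
  -- prop(u) = idp ∧ val(u) = 0 ∧ f₁, f₂ on the row of u and the columns of c₁, c₂
  (pr 8).val = 2 ∧ vl 8 = false ∧
  sj 8 = sj 9 ∧ pr 9 = pr 1 ∧
  sj 8 = sj 10 ∧ pr 10 = pr 2 ∧
  -- val(f₁) = 1 ∧ val(f₂) = 1
  vl 9 = true ∧ vl 10 = true

/-- The consequent of the rule `r₀`: `(val(d₁) = 1 ∨ val(d₂) = 1) ∧ val(z) = 0`. -/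
def ConseqR0 (N : ℕ) (adj : ℕ → ℕ → Bool) (T : Finset (Fin (4 * N)))
    (ρ : Fin 11 → CellT N T) : Prop :=
  let vl : Fin 11 → Bool := fun k => MG N adj ((ρ k).1 : Fin (4 * N)) ((ρ k).2)
  (vl 4 = true ∨ vl 5 = true) ∧ vl 6 = false

/-- The structuredness `σ_{r₀}` of the subgraph of `D_G` given by rows `T`:
favorable over total cases, `1` if there are no total cases. -/
noncomputable def sigmaR0 (N : ℕ) (adj : ℕ → ℕ → Bool)
    (T : Finset (Fin (4 * N))) : ℚ :=
  let total := Nat.card {ρ : Fin 11 → CellT N T // AntR0 N adj T ρ}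
  let fav := Nat.card {ρ : Fin 11 → CellT N T // AntR0 N adj T ρ ∧ ConseqR0 N adj T ρ}
  if total = 0 then 1 else (fav : ℚ) / total

/-!
In a match of the antecedent of `r₀`, `x` is the `idp` cell of an auxiliary row of some node
`i`, so `c₁, c₂` are the two identity cells of that row, while `y` and `u` lie on lower rows
and `f₁, f₂` force `u` to be the row of node `i`. Hence one of `d₁, d₂` reads the complemented
adjacency entry of the node of `y` and `i`, which is `1` as soon as the lower rows of the block
form an independent set (with no loops). And `z` has value `0`: otherwise `e` would be a cell of
value `1` in the column of `c₁` on an auxiliary row of node `i`, which is the row of `c₁` as soon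
as all auxiliary rows of the block come from one section, so `e = c₁`. The blocks of a proper
3-coloring have both properties, so every total case is favorable.
-/

section MatrixEntries

variable {N : ℕ} {adj : ℕ → ℕ → Bool}

lemma MG_idp (r : Fin (4 * N)) {c : Fin (2 * N + 3)} (hc : c.val = 2) :
    MG N adj r c = decide (r.val / N ≠ 3) := by
  simp [MG, hc]

lemma MG_eq_true_of_upper (r : Fin (4 * N)) (c : Fin (2 * N + 3)) (hr : r.val / N ≠ 3)
    (h0 : c.val ≠ 0) (h1 : c.val ≠ 1) (hv : MG N adj r c = true) :
    c.val = 2 ∨ c.val = 3 + r.val % N ∨ c.val = 3 + N + r.val % N := by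
  simp only [MG, if_neg h0, if_neg h1] at hv
  split_ifs at hv <;> simp_all

lemma mod_eq_of_MG_left (r : Fin (4 * N)) {c : Fin (2 * N + 3)} {j : ℕ}
    (hc : c.val = 3 + j) (hj : j < N) (hv : MG N adj r c = true) :
    r.val % N = j := by
  simp only [MG, if_neg (by omega : c.val ≠ 0), if_neg (by omega : c.val ≠ 1),
    if_neg (by omega : c.val ≠ 2), if_pos (by omega : c.val < 3 + N),
    decide_eq_true_iff] at hv
  omega

lemma mod_eq_of_MG_right_of_upper (r : Fin (4 * N)) {c : Fin (2 * N + 3)} {j : ℕ}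
    (hr : r.val / N ≠ 3) (hc : c.val = 3 + N + j) (hv : MG N adj r c = true) :
    r.val % N = j := by
  simp only [MG, if_neg (by omega : c.val ≠ 0), if_neg (by omega : c.val ≠ 1),
    if_neg (by omega : c.val ≠ 2), if_neg (by omega : ¬ c.val < 3 + N), if_pos hr,
    decide_eq_true_iff] at hv
  omega

lemma MG_right_of_lower (r : Fin (4 * N)) {c : Fin (2 * N + 3)} {j : ℕ}
    (hr : r.val / N = 3) (hc : c.val = 3 + N + j) :
    MG N adj r c = !adj (r.val % N) j := by
  simp only [MG, if_neg (by omega : c.val ≠ 0), if_neg (by omega : c.val ≠ 1),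
    if_neg (by omega : c.val ≠ 2), if_neg (by omega : ¬ c.val < 3 + N), hr, ne_eq,
    not_true_eq_false, if_false]
  rw [show c.val - (3 + N) = j by omega]

end MatrixEntries

def UpperRowsInOneSection (N : ℕ) (T : Finset (Fin (4 * N))) : Prop :=
  ∀ r ∈ T, ∀ r' ∈ T, r.val / N ≠ 3 → r'.val / N ≠ 3 → r.val / N = r'.val / N

def LowerRowsIndependent (N : ℕ) (adj : ℕ → ℕ → Bool) (T : Finset (Fin (4 * N))) : Prop :=
  ∀ r ∈ T, ∀ r' ∈ T, r.val / N = 3 → r'.val / N = 3 → adj (r.val % N) (r'.val % N) = false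

section Antecedent

variable {N : ℕ} {adj : ℕ → ℕ → Bool} {T : Finset (Fin (4 * N))} {ρ : Fin 11 → CellT N T}

lemma antR0_identity_cells (hA : AntR0 N adj T ρ) :
    (ρ 0).1.1.val / N ≠ 3 ∧
      (((ρ 1).2.val = 3 + (ρ 0).1.1.val % N ∧ (ρ 2).2.val = 3 + N + (ρ 0).1.1.val % N) ∨
        ((ρ 1).2.val = 3 + N + (ρ 0).1.1.val % N ∧ (ρ 2).2.val = 3 + (ρ 0).1.1.val % N)) := by
  obtain ⟨hsp, hpx, hvx, hc1x, hs1, hv1, hc2x, hs2, hv2, hc12, -⟩ := hA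
  dsimp only at *
  have hx : (ρ 0).1.1.val / N ≠ 3 := by simpa [MG_idp _ hpx] using hvx
  have hcol : ∀ k, ρ k ≠ ρ 0 → (ρ k).1.1 = (ρ 0).1.1 → MG N adj (ρ k).1 (ρ k).2 = true →
      (ρ k).2.val ≠ 0 → (ρ k).2.val ≠ 1 →
      (ρ k).2.val = 3 + (ρ 0).1.1.val % N ∨ (ρ k).2.val = 3 + N + (ρ 0).1.1.val % N := by
    intro k hkx hsk hvk h0 h1
    rw [hsk] at hvk
    rcases MG_eq_true_of_upper _ _ hx h0 h1 hvk with h2 | h | h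
    · exact absurd (Prod.ext (Subtype.ext hsk) (Fin.ext (h2.trans hpx.symm))) hkx
    · exact Or.inl h
    · exact Or.inr h
  have hc1 := hcol 1 hc1x hs1 hv1 (hsp 1 (by decide)).1 (hsp 1 (by decide)).2
  have hc2 := hcol 2 hc2x hs2 hv2 (hsp 2 (by decide)).1 (hsp 2 (by decide)).2
  have hcol12 : (ρ 1).2.val ≠ (ρ 2).2.val := fun h =>
    hc12 (Prod.ext (Subtype.ext (hs1.trans hs2.symm)) (Fin.ext h))
  exact ⟨hx, by omega⟩

lemma antR0_d_eq_true (hlower : LowerRowsIndependent N adj T) (hA : AntR0 N adj T ρ) :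
    MG N adj (ρ 4).1 (ρ 4).2 = true ∨ MG N adj (ρ 5).1 (ρ 5).2 = true := by
  obtain ⟨-, hc⟩ := antR0_identity_cells hA
  obtain ⟨-, -, -, -, -, -, -, -, -, -, hpy, hvy, hs4, hp4, hs5, hp5, -, -, -, -, -, hpu, hvu,
    hs9, hp9, hs10, hp10, hv9, hv10⟩ := hA
  dsimp only at *
  have hN : 0 < N := by have := (ρ 0).1.1.isLt; omega
  have hy : (ρ 3).1.1.val / N = 3 := by simpa [MG_idp _ hpy] using hvy
  have hu : (ρ 8).1.1.val / N = 3 := by simpa [MG_idp _ hpu] using hvu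
  have hu0 : (ρ 8).1.1.val % N = (ρ 0).1.1.val % N := by
    rcases hc with ⟨h, -⟩ | ⟨-, h⟩
    · exact mod_eq_of_MG_left _ (hp9 ▸ h) (Nat.mod_lt _ hN) (hs9 ▸ hv9)
    · exact mod_eq_of_MG_left _ (hp10 ▸ h) (Nat.mod_lt _ hN) (hs10 ▸ hv10)
  have hy0 : adj ((ρ 3).1.1.val % N) ((ρ 0).1.1.val % N) = false :=
    hu0 ▸ hlower _ (ρ 3).1.2 _ (ρ 8).1.2 hy hu
  rcases hc with ⟨-, h⟩ | ⟨h, -⟩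
  · right
    rw [hs5, MG_right_of_lower _ hy (hp5 ▸ h), hy0, Bool.not_false]
  · left
    rw [hs4, MG_right_of_lower _ hy (hp4 ▸ h), hy0, Bool.not_false]

lemma antR0_z_eq_false (hupper : UpperRowsInOneSection N T) (hA : AntR0 N adj T ρ) :
    MG N adj (ρ 6).1 (ρ 6).2 = false := by
  obtain ⟨hx, hc⟩ := antR0_identity_cells hA
  obtain ⟨-, -, -, -, hs1, -, -, -, -, -, -, -, -, -, -, -, hpz, hsz, hp7, hne7, hv7, -⟩ := hA
  dsimp only at *
  have hN : 0 < N := by have := (ρ 0).1.1.isLt; omega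
  rw [MG_idp _ hpz, hsz, decide_eq_false_iff_not, not_not]
  by_contra he
  have he0 : (ρ 7).1.1.val % N = (ρ 0).1.1.val % N := by
    rcases hc with ⟨h, -⟩ | ⟨h, -⟩
    · exact mod_eq_of_MG_left _ (hp7 ▸ h) (Nat.mod_lt _ hN) hv7
    · exact mod_eq_of_MG_right_of_upper _ he (hp7 ▸ h) hv7
  have hrow : (ρ 7).1.1 = (ρ 1).1.1 :=
    hs1 ▸ Fin.ext (Nat.ext_div_mod (hupper _ (ρ 7).1.2 _ (ρ 0).1.2 he hx) he0)
  exact hne7 (Prod.ext (Subtype.ext hrow) hp7)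

end Antecedent

lemma sigmaR0_eq_one_of_forall_conseqR0 {N : ℕ} {adj : ℕ → ℕ → Bool}
    {T : Finset (Fin (4 * N))}
    (h : ∀ ρ : Fin 11 → CellT N T, AntR0 N adj T ρ → ConseqR0 N adj T ρ) :
    sigmaR0 N adj T = 1 := by
  have hcard : Nat.card {ρ : Fin 11 → CellT N T // AntR0 N adj T ρ ∧ ConseqR0 N adj T ρ}
      = Nat.card {ρ : Fin 11 → CellT N T // AntR0 N adj T ρ} :=
    Nat.card_congr (Equiv.subtypeEquivRight fun ρ => ⟨And.left, fun hA => ⟨hA, h ρ hA⟩⟩)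
  dsimp only [sigmaR0]
  split_ifs with h0
  · rfl
  · rw [hcard, div_self (by exact_mod_cast h0)]

def colorBlock (N : ℕ) (f : ℕ → Fin 3) (r : Fin (4 * N)) : Fin 3 :=
  if h : r.val < 3 * N then ⟨r.val / N, Nat.div_lt_of_lt_mul (Nat.mul_comm 3 N ▸ h)⟩
  else f (r.val - 3 * N)

lemma colorBlock_val_of_upper {N : ℕ} (f : ℕ → Fin 3) {r : Fin (4 * N)} (hr : r.val / N ≠ 3) :
    (colorBlock N f r).val = r.val / N := by
  have hN : 0 < N := by have := r.isLt; omega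
  have : r.val / N < 4 := Nat.div_lt_of_lt_mul (by omega)
  rw [colorBlock, dif_pos ((Nat.div_lt_iff_lt_mul hN).mp (by omega))]

lemma colorBlock_of_lower {N : ℕ} (f : ℕ → Fin 3) {r : Fin (4 * N)} (hr : r.val / N = 3) :
    colorBlock N f r = f (r.val % N) := by
  have hN : 0 < N := by have := r.isLt; omega
  rw [colorBlock, dif_neg (not_lt.mpr ((Nat.le_div_iff_mul_le hN).mp hr.ge)),
    Nat.mod_eq_sub_mul_div, hr, Nat.mul_comm N 3]

lemma upperRowsInOneSection_colorBlock {N : ℕ} (f : ℕ → Fin 3) (t : Fin 3) :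
    UpperRowsInOneSection N (Finset.univ.filter fun r => colorBlock N f r = t) := by
  intro r hr r' hr' h h'
  rw [← colorBlock_val_of_upper f h, ← colorBlock_val_of_upper f h',
    (Finset.mem_filter.mp hr).2, (Finset.mem_filter.mp hr').2]

lemma lowerRowsIndependent_colorBlock {N : ℕ} {adj : ℕ → ℕ → Bool} (hirr : ∀ i, adj i i = false)
    {f : ℕ → Fin 3} (hf : ∀ i j, i < N → j < N → adj i j = true → f i ≠ f j) (t : Fin 3) :
    LowerRowsIndependent N adj (Finset.univ.filter fun r => colorBlock N f r = t) := by
  intro r hr r' hr' h h'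
  have hN : 0 < N := by have := r.isLt; omega
  have hcolor : f (r.val % N) = f (r'.val % N) := by
    rw [← colorBlock_of_lower f h, ← colorBlock_of_lower f h',
      (Finset.mem_filter.mp hr).2, (Finset.mem_filter.mp hr').2]
  by_cases heq : r.val % N = r'.val % N
  · rw [heq, hirr]
  · exact Bool.eq_false_iff.mpr fun hadj =>
      hf _ _ (Nat.mod_lt _ hN) (Nat.mod_lt _ hN) hadj hcolor

/-- If `G` is 3-colorable via `f`, then assigning the `i`-th auxiliary section
of rows of `M_G` to block `T_i` and the lower-section row `3N + v` (node `v`)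
to block `T_{f(v)}` yields `σ_{r₀}(T_i) = 1` for each of the three blocks. -/
theorem stmt9 (N : ℕ) (adj : ℕ → ℕ → Bool)
    (hirr : ∀ i, adj i i = false)
    (f : ℕ → Fin 3) (hf : ∀ i j, i < N → j < N → adj i j = true → f i ≠ f j) :
    ∀ t : Fin 3,
      sigmaR0 N adj (Finset.univ.filter (fun r : Fin (4 * N) =>
        (if h : r.val < 3 * N then
            (⟨r.val / N, Nat.div_lt_of_lt_mul (by omega)⟩ : Fin 3)
          else f (r.val - 3 * N)) = t)) = 1 := by
  intro t
  exact sigmaR0_eq_one_of_forall_conseqR0 fun _ hA =>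
    ⟨antR0_d_eq_true (lowerRowsIndependent_colorBlock hirr hf t) hA,
      antR0_z_eq_false (upperRowsInOneSection_colorBlock f t) hA⟩
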